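/- Let ι and κ be finite nonempty index types, let ρ₁, σ₁ : Matrix ι ι ℂ and ρ₂, σ₂ : Matrix κ κ ℂ be positive definite Hermitian matrices each with trace 1. Then the quantum relative entropy is additive over Kronecker products: S(ρ₁ ⊗ₖ ρ₂ ‖ σ₁ ⊗ₖ σ₂) = S(ρ₁ ‖ σ₁) + S(ρ₂ ‖ σ₂). -/

import Mathlib

/-!
Diagonalise `A = U diag(λ) U*` and `B = V diag(μ) V*`. Then `A ⊗ₖ B` is diagonalised by the
unitary `U ⊗ₖ V` with eigenvalues `λᵢ μⱼ`, so for positive definite `A`, `B` the identity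
`log (λᵢ μⱼ) = log λᵢ + log μⱼ` gives `log (A ⊗ₖ B) = log A ⊗ₖ 1 + 1 ⊗ₖ log B`.
Pairing with `ρ₁ ⊗ₖ ρ₂` and using `tr ρ₁ = tr ρ₂ = 1` splits the relative entropy into
the two relative entropies.
-/

open Matrix Kronecker
open scoped ComplexOrder

/-- `matLog ρ` is `Real.log` applied to a Hermitian matrix `ρ` through the
continuous functional calculus (`Matrix.IsHermitian.cfc`); junk value `0` on
non-Hermitian matrices. -/
noncomputable def matLog {n : Type*} [Fintype n] [DecidableEq n]
    (ρ : Matrix n n ℂ) : Matrix n n ℂ :=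
  if h : ρ.IsHermitian then h.cfc Real.log else 0

/-- The von Neumann entropy `S(ρ) = -Re (tr (ρ log ρ))`. -/
noncomputable def vnEntropy {n : Type*} [Fintype n] [DecidableEq n]
    (ρ : Matrix n n ℂ) : ℝ :=
  -(Matrix.trace (ρ * matLog ρ)).re

/-- The quantum relative entropy `S(ρ‖σ) = Re (tr (ρ (log ρ - log σ)))`. -/
noncomputable def relEnt {n : Type*} [Fintype n] [DecidableEq n]
    (ρ σ : Matrix n n ℂ) : ℝ :=
  (Matrix.trace (ρ * (matLog ρ - matLog σ))).re

/-- Partial trace over the second tensor factor. -/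
noncomputable def ptr₂ {ι κ : Type*} [Fintype κ]
    (M : Matrix (ι × κ) (ι × κ) ℂ) : Matrix ι ι ℂ :=
  Matrix.of fun i i' => ∑ k, M (i, k) (i', k)

/-- Partial trace over the first tensor factor. -/
noncomputable def ptr₁ {ι κ : Type*} [Fintype ι]
    (M : Matrix (ι × κ) (ι × κ) ℂ) : Matrix κ κ ℂ :=
  Matrix.of fun k k' => ∑ i, M (i, k) (i, k')

open Unitary

namespace Matrix

variable {𝕜 n : Type*} [RCLike 𝕜] [Fintype n] [DecidableEq n]

lemma mem_spectrum_diagonal_ofReal (d : n → ℝ) (i : n) :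
    d i ∈ spectrum ℝ (diagonal fun j => (d j : 𝕜)) := by
  rw [← spectrum.algebraMap_mem_iff 𝕜, spectrum_diagonal]
  exact ⟨i, rfl⟩

omit [Fintype n] in
lemma isSelfAdjoint_diagonal_ofReal (d : n → ℝ) :
    IsSelfAdjoint (diagonal fun i => (d i : 𝕜)) := by
  simp [IsSelfAdjoint, star_eq_conjTranspose, diagonal_conjTranspose, Pi.star_def]

noncomputable def cfcHomDiagonalOfReal (d : n → ℝ) :
    C(spectrum ℝ (diagonal fun i => (d i : 𝕜)), ℝ) →⋆ₐ[ℝ] Matrix n n 𝕜 where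
  toFun g := diagonal fun i => (g ⟨d i, mem_spectrum_diagonal_ofReal d i⟩ : 𝕜)
  map_one' := by simp [← diagonal_one]
  map_mul' f g := by simp [diagonal_mul_diagonal]
  map_zero' := by simp [← diagonal_zero]
  map_add' f g := by simp [diagonal_add]
  commutes' r := by simp [algebraMap_eq_diagonal, Pi.algebraMap_def]
  map_star' f := by simp [star_eq_conjTranspose, diagonal_conjTranspose, Pi.star_def]

lemma continuous_cfcHomDiagonalOfReal (d : n → ℝ) :
    Continuous (cfcHomDiagonalOfReal (𝕜 := 𝕜) d) := by
  show Continuous fun g : C(spectrum ℝ (diagonal fun i => (d i : 𝕜)), ℝ) =>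
    diagonal fun i => (g ⟨d i, mem_spectrum_diagonal_ofReal d i⟩ : 𝕜)
  fun_prop

lemma cfc_diagonal_ofReal (f : ℝ → ℝ) (d : n → ℝ) :
    cfc f (diagonal fun i => (d i : 𝕜)) = diagonal fun i => (f (d i) : 𝕜) := by
  have ha := isSelfAdjoint_diagonal_ofReal (𝕜 := 𝕜) d
  rw [cfc_apply f _ ha ((Set.toFinite _).continuousOn f),
    cfcHom_eq_of_continuous_of_map_id ha _ (continuous_cfcHomDiagonalOfReal d) rfl]
  rfl

lemma cfc_conjStarAlgAut (f : ℝ → ℝ) (u : unitary (Matrix n n 𝕜)) (a : Matrix n n 𝕜) :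
    cfc f (conjStarAlgAut 𝕜 _ u a) = conjStarAlgAut 𝕜 _ u (cfc f a) := by
  set φ := conjStarAlgAut 𝕜 (Matrix n n 𝕜) u
  by_cases ha : IsSelfAdjoint a
  · have hφ : Continuous φ := by
      show Continuous fun x : Matrix n n 𝕜 => (u : Matrix n n 𝕜) * x * star (u : Matrix n n 𝕜)
      fun_prop
    exact (φ.toStarAlgHom.map_cfc f a ((Set.toFinite _).continuousOn f) hφ ha (ha.map _)).symm
  · have hφa : ¬IsSelfAdjoint (φ a) := fun h => ha (by simpa using h.map φ.symm)
    rw [cfc_apply_of_not_predicate a ha, cfc_apply_of_not_predicate _ hφa, map_zero]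

variable {ι κ : Type*} [Fintype ι] [DecidableEq ι] [Fintype κ] [DecidableEq κ]

noncomputable def unitaryKronecker (u₁ : unitary (Matrix ι ι 𝕜)) (u₂ : unitary (Matrix κ κ 𝕜)) :
    unitary (Matrix (ι × κ) (ι × κ) 𝕜) :=
  ⟨u₁ ⊗ₖ u₂, kronecker_mem_unitary u₁.2 u₂.2⟩

@[simp]
lemma coe_unitaryKronecker (u₁ : unitary (Matrix ι ι 𝕜)) (u₂ : unitary (Matrix κ κ 𝕜)) :
    (unitaryKronecker u₁ u₂ : Matrix (ι × κ) (ι × κ) 𝕜) = u₁ ⊗ₖ u₂ :=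
  rfl

lemma conjStarAlgAut_kronecker (u₁ : unitary (Matrix ι ι 𝕜)) (u₂ : unitary (Matrix κ κ 𝕜))
    (X : Matrix ι ι 𝕜) (Y : Matrix κ κ 𝕜) :
    conjStarAlgAut 𝕜 (Matrix (ι × κ) (ι × κ) 𝕜) (unitaryKronecker u₁ u₂) (X ⊗ₖ Y) =
      conjStarAlgAut 𝕜 _ u₁ X ⊗ₖ conjStarAlgAut 𝕜 _ u₂ Y := by
  rw [conjStarAlgAut_apply, conjStarAlgAut_apply, conjStarAlgAut_apply, coe_unitaryKronecker,
    star_eq_conjTranspose, conjTranspose_kronecker, mul_kronecker_mul, mul_kronecker_mul]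
  rfl

lemma IsHermitian.cfc_kronecker_eq_add {A : Matrix ι ι 𝕜} {B : Matrix κ κ 𝕜}
    (hA : A.IsHermitian) (hB : B.IsHermitian) {f g h : ℝ → ℝ}
    (hfgh : ∀ i j, f (hA.eigenvalues i * hB.eigenvalues j) =
      g (hA.eigenvalues i) + h (hB.eigenvalues j)) :
    cfc f (A ⊗ₖ B) = cfc g A ⊗ₖ 1 + 1 ⊗ₖ cfc h B := by
  have hAB : A ⊗ₖ B = conjStarAlgAut 𝕜 (Matrix (ι × κ) (ι × κ) 𝕜)
      (unitaryKronecker hA.eigenvectorUnitary hB.eigenvectorUnitary)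
      (diagonal fun p => ((hA.eigenvalues p.1 * hB.eigenvalues p.2 : ℝ) : 𝕜)) := by
    conv_lhs => rw [hA.spectral_theorem, hB.spectral_theorem]
    rw [← conjStarAlgAut_kronecker, diagonal_kronecker_diagonal]
    simp only [Function.comp_apply, RCLike.ofReal_mul]
  have hsplit : (diagonal fun p : ι × κ =>
      ((g (hA.eigenvalues p.1) + h (hB.eigenvalues p.2) : ℝ) : 𝕜)) =
      diagonal (fun i => (g (hA.eigenvalues i) : 𝕜)) ⊗ₖ diagonal (fun _ : κ => 1) +
        diagonal (fun _ : ι => 1) ⊗ₖ diagonal (fun j => (h (hB.eigenvalues j) : 𝕜)) := by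
    rw [diagonal_kronecker_diagonal, diagonal_kronecker_diagonal, diagonal_add]
    simp
  rw [hAB, cfc_conjStarAlgAut, cfc_diagonal_ofReal]
  simp only [hfgh, hsplit]
  rw [map_add, conjStarAlgAut_kronecker, conjStarAlgAut_kronecker, hA.cfc_eq, hB.cfc_eq,
    IsHermitian.cfc, IsHermitian.cfc, diagonal_one, diagonal_one, map_one, map_one]
  rfl

lemma trace_kronecker_mul_add_kronecker {R : Type*} [CommSemiring R]
    (A X : Matrix ι ι R) (B Y : Matrix κ κ R) :
    trace ((A ⊗ₖ B) * (X ⊗ₖ 1 + 1 ⊗ₖ Y)) = trace (A * X) * trace B + trace A * trace (B * Y) := by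
  rw [mul_add, trace_add, ← mul_kronecker_mul, ← mul_kronecker_mul, trace_kronecker,
    trace_kronecker, mul_one, mul_one]

end Matrix

lemma matLog_eq_cfc {n : Type*} [Fintype n] [DecidableEq n] {A : Matrix n n ℂ}
    (hA : A.IsHermitian) : matLog A = cfc Real.log A := by
  rw [matLog, dif_pos hA, hA.cfc_eq]

lemma matLog_kronecker {ι κ : Type*} [Fintype ι] [DecidableEq ι] [Fintype κ] [DecidableEq κ]
    {A : Matrix ι ι ℂ} {B : Matrix κ κ ℂ} (hA : A.PosDef) (hB : B.PosDef) :
    matLog (A ⊗ₖ B) = matLog A ⊗ₖ 1 + 1 ⊗ₖ matLog B := by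
  rw [matLog_eq_cfc (hA.kronecker hB).isHermitian, matLog_eq_cfc hA.isHermitian,
    matLog_eq_cfc hB.isHermitian]
  exact hA.isHermitian.cfc_kronecker_eq_add hB.isHermitian fun i j =>
    Real.log_mul (hA.eigenvalues_pos i).ne' (hB.eigenvalues_pos j).ne'

theorem relEnt_kronecker_general {ι κ : Type*} [Fintype ι] [Fintype κ]
    [DecidableEq ι] [DecidableEq κ]
    (ρ₁ σ₁ : Matrix ι ι ℂ) (ρ₂ σ₂ : Matrix κ κ ℂ)
    (hρ₁ : ρ₁.PosDef) (hσ₁ : σ₁.PosDef) (hρ₂ : ρ₂.PosDef) (hσ₂ : σ₂.PosDef)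
    (hρ₁1 : Matrix.trace ρ₁ = 1)
    (hρ₂1 : Matrix.trace ρ₂ = 1) :
    relEnt (ρ₁ ⊗ₖ ρ₂) (σ₁ ⊗ₖ σ₂) = relEnt ρ₁ σ₁ + relEnt ρ₂ σ₂ := by
  simp only [relEnt, matLog_kronecker hρ₁ hρ₂, matLog_kronecker hσ₁ hσ₂, mul_sub, trace_sub,
    trace_kronecker_mul_add_kronecker, hρ₁1, hρ₂1, mul_one, one_mul, Complex.sub_re,
    Complex.add_re]
  ring

/-- Additivity of the quantum relative entropy over Kronecker products:
`S(ρ₁ ⊗ₖ ρ₂ ‖ σ₁ ⊗ₖ σ₂) = S(ρ₁ ‖ σ₁) + S(ρ₂ ‖ σ₂)`. -/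
theorem relEnt_kronecker {ι κ : Type*} [Fintype ι] [Fintype κ]
    [DecidableEq ι] [DecidableEq κ] [Nonempty ι] [Nonempty κ]
    (ρ₁ σ₁ : Matrix ι ι ℂ) (ρ₂ σ₂ : Matrix κ κ ℂ)
    (hρ₁ : ρ₁.PosDef) (hσ₁ : σ₁.PosDef) (hρ₂ : ρ₂.PosDef) (hσ₂ : σ₂.PosDef)
    (hρ₁1 : Matrix.trace ρ₁ = 1) (hσ₁1 : Matrix.trace σ₁ = 1)
    (hρ₂1 : Matrix.trace ρ₂ = 1) (hσ₂1 : Matrix.trace σ₂ = 1) :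
    relEnt (ρ₁ ⊗ₖ ρ₂) (σ₁ ⊗ₖ σ₂) = relEnt ρ₁ σ₁ + relEnt ρ₂ σ₂ :=
  relEnt_kronecker_general ρ₁ σ₁ ρ₂ σ₂ hρ₁ hσ₁ hρ₂ hσ₂ hρ₁1 hρ₂1
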